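/- arXiv:2201.06274 — 2 statements merged into one kernel-verified Lean document; each statement's English description precedes it below -/
import Mathlib

section
/- If φ₁ and φ₂ are generators admissible at a state s such that TR(φ₁) is vertex-disjoint from SUP(φ₂) and TR(φ₂) is vertex-disjoint from SUP(φ₁), then φ₂ is admissible at φ₁[s], φ₁ is admissible at φ₂[s], and φ₂[φ₁[s]] = φ₁[φ₂[s]]. -/
/-- A generator of a reconfigurable system on a graph with vertex set `V` and
label set `A`: a support, a trace contained in the support, and an unordered
pair of local states that agree off the trace and differ on every trace vertex.
(Local states are modelled as functions `V → A`; only their values on the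
support are relevant.) -/
structure Generator (V : Type*) (A : Type*) where
  sup : Set V
  tr : Set V
  tr_sub : tr ⊆ sup
  u0 : V → A
  u1 : V → A
  agree : ∀ v ∈ sup, v ∉ tr → u0 v = u1 v
  differ : ∀ v ∈ tr, u0 v ≠ u1 v

/-- A generator is admissible at a state `s` if `s` restricted to the support
matches one of the two local states. -/
def Generator.Admissible {V A : Type*} (φ : Generator V A) (s : V → A) : Prop :=
  (∀ v ∈ φ.sup, s v = φ.u0 v) ∨ (∀ v ∈ φ.sup, s v = φ.u1 v)

open Classical in
/-- Applying a generator to a state: relabel the trace vertices to match the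
other local state, leaving all other vertices unchanged. -/
noncomputable def Generator.apply {V A : Type*} (φ : Generator V A) (s : V → A) :
    V → A :=
  fun v => if v ∈ φ.tr then (if s v = φ.u0 v then φ.u1 v else φ.u0 v) else s v

lemma Generator.apply_of_not_tr {V A : Type*} (φ : Generator V A) (s : V → A)
    {v : V} (h : v ∉ φ.tr) : φ.apply s v = s v := by
  simp [Generator.apply, h]

/-- If `φ₁, φ₂` are admissible at `s`, with `TR(φ₁)` vertex-disjoint
from `SUP(φ₂)` and `TR(φ₂)` vertex-disjoint from `SUP(φ₁)`, then `φ₂` is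
admissible at `φ₁[s]`, `φ₁` is admissible at `φ₂[s]`, and
`φ₂[φ₁[s]] = φ₁[φ₂[s]]`. -/
theorem generators_commute {V A : Type*} (φ₁ φ₂ : Generator V A) (s : V → A)
    (h₁ : φ₁.Admissible s) (h₂ : φ₂.Admissible s)
    (hd₁ : Disjoint φ₁.tr φ₂.sup) (hd₂ : Disjoint φ₂.tr φ₁.sup) :
    φ₂.Admissible (φ₁.apply s) ∧ φ₁.Admissible (φ₂.apply s) ∧
      φ₂.apply (φ₁.apply s) = φ₁.apply (φ₂.apply s) := by
  have key : ∀ (ψ χ : Generator V A), Disjoint ψ.tr χ.sup →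
      χ.Admissible s → χ.Admissible (ψ.apply s) := by
    intro ψ χ hd hχ
    have h : ∀ v ∈ χ.sup, ψ.apply s v = s v := fun v hv =>
      ψ.apply_of_not_tr s (fun ht => hd.le_bot ⟨ht, hv⟩)
    rcases hχ with hχ | hχ
    · exact Or.inl fun v hv => (h v hv).trans (hχ v hv)
    · exact Or.inr fun v hv => (h v hv).trans (hχ v hv)
  refine ⟨key φ₁ φ₂ hd₁ h₂, key φ₂ φ₁ hd₂ h₁, funext fun v => ?_⟩
  by_cases ht1 : v ∈ φ₁.tr
  · have ht2 : v ∉ φ₂.tr := fun h => hd₂.le_bot ⟨h, φ₁.tr_sub ht1⟩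
    simp only [Generator.apply, if_pos ht1, if_neg ht2]
    split_ifs <;> simp_all
  · by_cases ht2 : v ∈ φ₂.tr
    · simp only [Generator.apply, if_pos ht2, if_neg ht1]
      classical exact if_congr (by simp [ht1]) rfl rfl
    · simp only [Generator.apply, if_neg ht1, if_neg ht2]
end

section
/- Consider two agents at positions p, q ∈ ℤ² in an otherwise empty gridworld (all other cells floor). Suppose agent p has an admissible dance supported on a 2×2 subgrid D containing p (the other three cells of D are empty), and agent q has an admissible Move q→q'. Then the dance and the move fail to have disjoint supports while each individual Move within the dance has support disjoint from {q,q'} if and only if q' is the cell of D diagonally opposite to p; in that case p and q differ by a knight move (their coordinate differences are ±1 and ±2 in some order). -/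
/-!
Since `q` lies outside the subgrid, the dance and the move can only meet at `q'`, which must
then lie in the subgrid. Each single Move of the dance covers `p` and a neighbour of `p` in the
subgrid, so all of them miss `q'` exactly when `q'` is the one cell of the subgrid not adjacent to
`p`, the opposite corner. A neighbour `q` of that corner outside the subgrid is one step beyond
it, hence a knight move away from `p`.
-/

/-- A cell of the gridworld. -/
abbrev Cell : Type := ℤ × ℤ

/-- Two cells are orthogonally adjacent if their `L¹`-distance is 1. -/
def Adj (c c' : Cell) : Prop :=
  (c.1 - c'.1).natAbs + (c.2 - c'.2).natAbs = 1

/-- The `2 × 2` subgrid with bottom-left corner `a`. -/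
def square (a : Cell) : Finset Cell :=
  {(a.1, a.2), (a.1 + 1, a.2), (a.1, a.2 + 1), (a.1 + 1, a.2 + 1)}

/-- The cell of the `2 × 2` subgrid `square a` diagonally opposite to `p`
(the unique cell of the subgrid at `L¹`-distance 2 from `p`). -/
def oppCell (a p : Cell) : Cell := (2 * a.1 + 1 - p.1, 2 * a.2 + 1 - p.2)

/-- Two agents' positions differ by a knight move: coordinate differences are
`±1` and `±2` in some order. -/
def KnightRel (p q : Cell) : Prop :=
  ((p.1 - q.1).natAbs = 1 ∧ (p.2 - q.2).natAbs = 2) ∨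
  ((p.1 - q.1).natAbs = 2 ∧ (p.2 - q.2).natAbs = 1)

lemma mem_square_iff {a c : Cell} :
    c ∈ square a ↔ (c.1 = a.1 ∨ c.1 = a.1 + 1) ∧ (c.2 = a.2 ∨ c.2 = a.2 + 1) := by
  obtain ⟨a1, a2⟩ := a; obtain ⟨c1, c2⟩ := c
  simp only [square, Finset.mem_insert, Finset.mem_singleton, Prod.mk.injEq]
  tauto

lemma oppCell_mem_square {a p : Cell} (hp : p ∈ square a) : oppCell a p ∈ square a := by
  have hp := mem_square_iff.mp hp
  rw [mem_square_iff, oppCell]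
  omega

lemma not_adj_oppCell {a p : Cell} (hp : p ∈ square a) : ¬ Adj p (oppCell a p) := by
  have hp := mem_square_iff.mp hp
  rw [Adj, oppCell]
  omega

lemma eq_oppCell_of_not_adj {a p d : Cell} (hp : p ∈ square a) (hd : d ∈ square a)
    (hdp : d ≠ p) (hpd : ¬ Adj p d) : d = oppCell a p := by
  have hp := mem_square_iff.mp hp
  have hd := mem_square_iff.mp hd
  rw [Adj] at hpd
  rw [ne_eq, Prod.ext_iff] at hdp
  rw [oppCell, Prod.ext_iff]
  omega

lemma knightRel_of_adj_oppCell {a p q : Cell} (hp : p ∈ square a) (hq : q ∉ square a)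
    (hadj : Adj q (oppCell a p)) : KnightRel p q := by
  have hp := mem_square_iff.mp hp
  rw [mem_square_iff] at hq
  rw [Adj, oppCell] at hadj
  rw [KnightRel]
  omega

lemma disjoint_pair_pair_iff {α : Type*} [DecidableEq α] {a b c d : α} :
    Disjoint ({a, b} : Finset α) {c, d} ↔ a ≠ c ∧ a ≠ d ∧ b ≠ c ∧ b ≠ d := by
  simp only [Finset.disjoint_insert_left, Finset.disjoint_singleton_left, Finset.mem_insert,
    Finset.mem_singleton, not_or, and_assoc]

lemma not_disjoint_square_pair_iff {a q q' : Cell} (hq : q ∉ square a) :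
    ¬ Disjoint (square a) {q, q'} ↔ q' ∈ square a := by
  simp [Finset.disjoint_insert_right, hq]

/-- two agents at `p` and `q` in an otherwise empty gridworld
(state `{p, q}`); the agent at `p` has an admissible dance on the 2×2 subgrid
`square a ∋ p` whose other three cells are empty, and the agent at `q` has an
admissible Move `q → q'`. Then the dance support and the move support
`{q, q'}` fail to be disjoint, while each Move within the dance admissible at
`p` has support disjoint from `{q, q'}`, if and only if `q'` is the cell of
the subgrid diagonally opposite `p`; and in that case `p` and `q` differ by a
knight move. -/
theorem dance_move_interference_iff_opposite (a p q q' : Cell)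
    (hpq : p ≠ q) (hp : p ∈ square a)
    (hempty : ∀ d ∈ square a, d ≠ p → d ∉ ({p, q} : Finset Cell))
    (hadj : Adj q q') (hq' : q' ∉ ({p, q} : Finset Cell)) :
    ((¬ Disjoint (square a) ({q, q'} : Finset Cell) ∧
        ∀ d ∈ square a, Adj p d →
          Disjoint ({p, d} : Finset Cell) ({q, q'} : Finset Cell)) ↔
      q' = oppCell a p) ∧
    (q' = oppCell a p → KnightRel p q) := by
  have hq : q ∉ square a := fun hq => hempty q hq hpq.symm (by simp)
  have hq'p : q' ≠ p := fun h => hq' (by simp [h])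
  rw [not_disjoint_square_pair_iff hq]
  refine ⟨⟨fun ⟨hq'_mem, hsep⟩ => ?_, fun h => ?_⟩,
    fun h => knightRel_of_adj_oppCell hp hq (h ▸ hadj)⟩
  · refine eq_oppCell_of_not_adj hp hq'_mem hq'p fun hpq' => ?_
    exact (disjoint_pair_pair_iff.mp (hsep q' hq'_mem hpq')).2.2.2 rfl
  · subst h
    refine ⟨oppCell_mem_square hp, fun d hd hpd => disjoint_pair_pair_iff.mpr ?_⟩
    refine ⟨hpq, hq'p.symm, ?_, ?_⟩
    · rintro rfl
      exact hq hd
    · rintro rfl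
      exact not_adj_oppCell hp hpd
end
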